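/- Let r ≥ 1 and let X ⊆ P_n be a nonempty set of partitions with |x| = r for all x ∈ X. If the ideal I_X is symmetric shifted, then every (z,l) ∈ Z(X) satisfies |z| + l + 1 ≤ r. -/

import Mathlib

open MvPolynomial

/-- `PartitionOn n x` : `x` is a weakly decreasing sequence of naturals (0-based
indexing, so `x 0` is the first part `x_1`) vanishing from index `n` on; this
encodes a partition in `P_n ⊆ ℤ^n_{≥0}`. -/
def PartitionOn (n : ℕ) (x : ℕ → ℕ) : Prop :=
  (∀ i j : ℕ, i ≤ j → x j ≤ x i) ∧ ∀ i : ℕ, n ≤ i → x i = 0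

/-- A partition: a weakly decreasing, eventually zero sequence of naturals. -/
def IsPartitionF (x : ℕ → ℕ) : Prop :=
  (∀ i j : ℕ, i ≤ j → x j ≤ x i) ∧ ∃ n : ℕ, ∀ i : ℕ, n ≤ i → x i = 0

/-- The conjugate partition (1-based index): `conj x i = #{j : x_j ≥ i}`. -/
noncomputable def conj (x : ℕ → ℕ) (i : ℕ) : ℕ :=
  Set.ncard { j : ℕ | i ≤ x j }

/-- The truncation `x(c)`, whose parts are `min (x i) c`. -/
def trunc (x : ℕ → ℕ) (c : ℕ) : ℕ → ℕ := fun i => min (x i) c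

/-- The rectangular partition `(b^a)`: `a` parts equal to `b`. -/
def rect (a b : ℕ) : ℕ → ℕ := fun i => if i < a then b else 0

/-- The size `|x| = x_1 + ⋯ + x_n` of a partition supported in the first `n` indices. -/
def psize (n : ℕ) (x : ℕ → ℕ) : ℕ := ∑ i ∈ Finset.range n, x i

/-- The set `Z(X)` : pairs `(z, l)` with `z ∈ P_n`, `l ≥ 0` such that, writing `c = z_1`:
(1) there is `x ∈ X` with `x(c) ≤ z` and `x'_{c+1} ≤ l+1`, and
(2) every `x ∈ X` with `x(c) ≤ z` and `x'_{c+1} ≤ l+1` has `x'_{c+1} = l+1`. -/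
noncomputable def ZX (n : ℕ) (X : Set (ℕ → ℕ)) : Set ((ℕ → ℕ) × ℕ) :=
  { zl | PartitionOn n zl.1 ∧
    (∃ x ∈ X, trunc x (zl.1 0) ≤ zl.1 ∧ conj x (zl.1 0 + 1) ≤ zl.2 + 1) ∧
    ∀ x ∈ X, trunc x (zl.1 0) ≤ zl.1 → conj x (zl.1 0 + 1) ≤ zl.2 + 1 →
      conj x (zl.1 0 + 1) = zl.2 + 1 }

/-- The monomial `e^u = e_1^{u_1} ⋯ e_n^{u_n}` in `S = k[e_1, …, e_n]`. -/
noncomputable def mon (k : Type*) [Field k] (n : ℕ) (u : ℕ → ℕ) : MvPolynomial (Fin n) k :=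
  ∏ i : Fin n, (X i : MvPolynomial (Fin n) k) ^ u (i : ℕ)

/-- The ideal `I_x` generated by the `S_n`-orbit of the monomial `e^x`. -/
noncomputable def Ipart (k : Type*) [Field k] (n : ℕ) (x : ℕ → ℕ) :
    Ideal (MvPolynomial (Fin n) k) :=
  Ideal.span { f | ∃ σ : Equiv.Perm (Fin n),
    f = ∏ i : Fin n, (X i : MvPolynomial (Fin n) k) ^ x ((σ i : Fin n) : ℕ) }

/-- The ideal `I_X = Σ_{x ∈ X} I_x`. -/
noncomputable def IXset (k : Type*) [Field k] (n : ℕ) (Xs : Set (ℕ → ℕ)) :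
    Ideal (MvPolynomial (Fin n) k) :=
  ⨆ x ∈ Xs, Ipart k n x

/-- `succ(z,l) = {x ∈ P_n : x ≥ z and x_i > z_i for some i > l}` (1-based `i > l`
corresponds to 0-based index `≥ l`). -/
def succSet (n l : ℕ) (z : ℕ → ℕ) : Set (ℕ → ℕ) :=
  { x | PartitionOn n x ∧ (∀ i, z i ≤ x i) ∧ ∃ i, l ≤ i ∧ z i < x i }

/-- `Y_{z,l} = {((z_1+1)^{l+1})} ∪ {((z_i+1)^i) : l+1 < i ≤ n, z_{i-1} > z_i}`
(here `i = m+2` in 1-based indexing). -/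
def Yset (n : ℕ) (z : ℕ → ℕ) (l : ℕ) : Set (ℕ → ℕ) :=
  {rect (l+1) (z 0 + 1)} ∪
    { y | ∃ m : ℕ, l ≤ m ∧ m + 2 ≤ n ∧ z (m+1) < z m ∧ y = rect (m+2) (z (m+1) + 1) }

/-- `Y'_{z,l} = {((z_i+1)^i) : l+1 < i ≤ n, z_{i-1} > z_i}`. -/
def Y'set (n : ℕ) (z : ℕ → ℕ) (l : ℕ) : Set (ℕ → ℕ) :=
  { y | ∃ m : ℕ, l ≤ m ∧ m + 2 ≤ n ∧ z (m+1) < z m ∧ y = rect (m+2) (z (m+1) + 1) }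

/-- An ideal `I` is symmetric shifted if for every monomial `e^x ∈ I` with `x ∈ P_n`
and every `1 < k ≤ n` (0-based `0 < j < n`) with `x_1 > x_k`, one has `e^x · e_k/e_1 ∈ I`. -/
def SymShifted (k : Type*) [Field k] (n : ℕ) (I : Ideal (MvPolynomial (Fin n) k)) : Prop :=
  ∀ x : ℕ → ℕ, PartitionOn n x → mon k n x ∈ I →
    ∀ j : ℕ, 0 < j → j < n → x j < x 0 →
      mon k n (fun i => if i = 0 then x 0 - 1 else if i = j then x j + 1 else x i) ∈ I

/-- The partitioning problem `BP(d, C; w)` is `r`-feasible: the multiset of `d` copies of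
each of `w_1, …, w_n` (balls indexed by `Fin d × Fin n`, ball `(j,i)` of weight `w_i`)
can be distributed into bins `B_1, …, B_n` of exactly `d` balls each so that
`w(B_i) ≤ C_i` for all `i = r+1, …, n` (0-based bins `≥ r`). -/
def RFeasible (n d r : ℕ) (C w : ℕ → ℕ) : Prop :=
  ∃ A : Fin d × Fin n → Fin n,
    (∀ b : Fin n, (Finset.univ.filter fun p => A p = b).card = d) ∧
    ∀ b : Fin n, r ≤ (b : ℕ) →
      (∑ p ∈ Finset.univ.filter (fun p => A p = b), w ((p.2 : Fin n) : ℕ)) ≤ C (b : ℕ)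

/-- `X_w^d = {x ∈ P_n : x = σ_1(w) + ⋯ + σ_d(w) for some σ_1, …, σ_d ∈ S_n}`. -/
def XwPow (n d : ℕ) (w : ℕ → ℕ) : Set (ℕ → ℕ) :=
  { x | PartitionOn n x ∧ ∃ σ : Fin d → Equiv.Perm (Fin n),
      ∀ i : Fin n, x (i : ℕ) = ∑ j : Fin d, w ((σ j i : Fin n) : ℕ) }

/-- `Y_n`: the elements of `Y` with at most `n` nonzero parts, regarded in `P_n`. -/
def restr (Y : Set (ℕ → ℕ)) (n : ℕ) : Set (ℕ → ℕ) :=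
  { x ∈ Y | ∀ i, n ≤ i → x i = 0 }


/-!
Suppose `r ≤ |z| + l` and let `c = z_1`. Among the `x ∈ X` with `x(c) ≤ z` and
`x'_{c+1} ≤ l + 1`, take one with the fewest boxes outside the first `c` columns. By
condition (2) it has `l + 1` rows longer than `c`, hence at least `l + 1` such boxes, so
`|x(c)| < |z|` and some row `i`, necessarily not the first, has `x_i < z_i`. Shiftedness moves
a box from the first row to row `i` inside `I_X`; the resulting monomial has degree `r`, so its
exponent is a rearrangement of some `x̃ ∈ X`. This `x̃` still satisfies both conditions but has
one box fewer outside the first `c` columns, contradicting minimality.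
-/

open Finset

section Monomials

variable {k : Type*} [Field k] {n : ℕ}

theorem prod_X_pow_eq_monomial_equivFunOnFinite {σ R : Type*} [Fintype σ] [CommSemiring R]
    (w : σ → ℕ) :
    ∏ i, (X i : MvPolynomial σ R) ^ w i = monomial (Finsupp.equivFunOnFinite.symm w) 1 := by
  rw [monomial_eq, C_1, one_mul, Finsupp.prod_fintype _ _ fun _ => pow_zero _]
  rfl

theorem IXset_eq_span_monomial (Xs : Set (ℕ → ℕ)) :
    IXset k n Xs = Ideal.span ((fun s => monomial s (1 : k)) ''
      {d | ∃ x ∈ Xs, ∃ σ : Equiv.Perm (Fin n),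
        d = Finsupp.equivFunOnFinite.symm fun i : Fin n => x (σ i)}) := by
  simp only [IXset, Ipart, Ideal.span, ← Submodule.span_iUnion₂]
  congr 1
  ext f
  simp only [Set.mem_iUnion, Set.mem_ofPred_eq, Set.mem_image, exists_prop,
    prod_X_pow_eq_monomial_equivFunOnFinite]
  constructor
  · rintro ⟨x, hx, σ, rfl⟩
    exact ⟨_, ⟨x, hx, σ, rfl⟩, rfl⟩
  · rintro ⟨d, ⟨x, hx, σ, rfl⟩, rfl⟩
    exact ⟨x, hx, σ, rfl⟩

theorem mon_mem_IXset_iff (Xs : Set (ℕ → ℕ)) (v : ℕ → ℕ) :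
    mon k n v ∈ IXset k n Xs ↔
      ∃ x ∈ Xs, ∃ σ : Equiv.Perm (Fin n), ∀ j : Fin n, x (σ j) ≤ v j := by
  classical
  rw [IXset_eq_span_monomial, mon, prod_X_pow_eq_monomial_equivFunOnFinite,
    mem_ideal_span_monomial_image, support_monomial, if_neg one_ne_zero]
  simp [Finsupp.le_def]

end Monomials

section Rearrangement

def IsRearrangement (n : ℕ) (v x : ℕ → ℕ) : Prop :=
  ∃ σ : Equiv.Perm (Fin n), ∀ j : Fin n, v j = x (σ j)

variable {n : ℕ} {v x : ℕ → ℕ}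

theorem IsRearrangement.sum_comp {M : Type*} [AddCommMonoid M] (h : IsRearrangement n v x)
    (g : ℕ → M) : ∑ j ∈ range n, g (v j) = ∑ j ∈ range n, g (x j) := by
  obtain ⟨σ, hσ⟩ := h
  rw [← Fin.sum_univ_eq_sum_range fun j => g (v j),
    ← Fin.sum_univ_eq_sum_range fun j => g (x j)]
  simp only [hσ]
  exact Equiv.sum_comp σ fun j : Fin n => g (x j)

theorem IsRearrangement.card_filter (h : IsRearrangement n v x) (p : ℕ → Prop)
    [DecidablePred p] : #{j ∈ range n | p (v j)} = #{j ∈ range n | p (x j)} := by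
  simp only [Finset.card_filter]
  exact h.sum_comp fun a => if p a then 1 else 0

theorem isRearrangement_of_le_of_sum_eq {σ : Equiv.Perm (Fin n)}
    (hle : ∀ j : Fin n, x (σ j) ≤ v j) (hsum : ∑ j ∈ range n, v j = ∑ j ∈ range n, x j) :
    IsRearrangement n v x := by
  have hsum' : ∑ j : Fin n, x (σ j) = ∑ j : Fin n, v j := by
    rw [Equiv.sum_comp σ fun j : Fin n => x j, Fin.sum_univ_eq_sum_range x,
      Fin.sum_univ_eq_sum_range v, hsum]
  exact ⟨σ, fun j => ((sum_eq_sum_iff_of_le fun j _ => hle j).mp hsum' j (mem_univ j)).symm⟩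

theorem trunc_le_of_isRearrangement {z : ℕ → ℕ} {c : ℕ} (hx : PartitionOn n x) (hz : Antitone z)
    (h : IsRearrangement n v x) (hvz : ∀ j < n, trunc v c j ≤ z j) : trunc x c ≤ z := by
  intro j
  by_cases hj : j < n
  swap
  · simp [trunc, hx.2 j (not_lt.mp hj)]
  by_contra! hlt
  simp only [trunc, lt_min_iff] at hlt
  have hx_count : j + 1 ≤ #{t ∈ range n | z j + 1 ≤ x t} := by
    refine (card_range (j + 1)).symm.le.trans (card_le_card fun t ht => ?_)
    rw [mem_range] at ht
    exact mem_filter.2 ⟨mem_range.2 (by omega), hlt.1.trans_le (hx.1 t j (by omega))⟩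
  have hv_count : #{t ∈ range n | z j + 1 ≤ v t} ≤ j := by
    refine (card_le_card fun t ht => ?_).trans (card_range j).le
    obtain ⟨htn, hvt⟩ := mem_filter.1 ht
    have hzt : z j < z t := lt_of_lt_of_le (by omega)
      ((le_min hvt (by omega)).trans (hvz t (mem_range.1 htn)))
    exact mem_range.2 (lt_of_not_ge fun hjt => (hz hjt).not_gt hzt)
  rw [h.card_filter] at hv_count
  omega

end Rearrangement

section Partitions

variable {n : ℕ} {x : ℕ → ℕ}

def excess (n c : ℕ) (x : ℕ → ℕ) : ℕ := ∑ j ∈ range n, (x j - c)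

theorem psize_eq_sum_trunc_add_excess (c : ℕ) :
    psize n x = ∑ j ∈ range n, trunc x c j + excess n c x := by
  rw [psize, excess, ← sum_add_distrib]
  exact sum_congr rfl fun j _ => by simp only [trunc]; omega

theorem conj_eq_card_filter (hx : ∀ j, n ≤ j → x j = 0) {m : ℕ} (hm : 0 < m) :
    conj x m = #{j ∈ range n | m ≤ x j} := by
  rw [conj, ← Set.ncard_coe_finset]
  congr 1
  ext j
  simp only [Set.mem_ofPred_eq, coe_filter, mem_range, iff_and_self]
  intro hmj
  by_contra! hj
  have := hx j hj
  omega

theorem conj_succ_le_excess (hx : ∀ j, n ≤ j → x j = 0) (c : ℕ) :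
    conj x (c + 1) ≤ excess n c x := by
  rw [conj_eq_card_filter hx c.succ_pos, Finset.card_filter, excess]
  exact sum_le_sum fun j _ => by split_ifs <;> omega

theorem PartitionOn.antitone (hx : PartitionOn n x) : Antitone x :=
  fun i j h => hx.1 i j h

theorem PartitionOn.le_head_of_conj_pos (hx : PartitionOn n x) {m : ℕ} (h : 0 < conj x m) :
    m ≤ x 0 := by
  obtain ⟨j, hj⟩ := Set.nonempty_of_ncard_ne_zero h.ne'
  exact hj.trans (hx.1 0 j j.zero_le)

theorem exists_lt_of_psize_le_add {z : ℕ → ℕ} {l : ℕ} (hx : ∀ j, n ≤ j → x j = 0)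
    (hz : Antitone z) (hsize : psize n x ≤ psize n z + l)
    (hxl : l + 1 ≤ conj x (z 0 + 1)) : ∃ i < n, x i < z i := by
  have hsplit := psize_eq_sum_trunc_add_excess (n := n) (x := x) (z 0)
  have hexcess := conj_succ_le_excess hx (z 0)
  obtain ⟨i, hi, hlt⟩ := exists_lt_of_sum_lt (s := range n) (f := trunc x (z 0)) (g := z)
    (by unfold psize at hsize hsplit; omega)
  have hzi : z i ≤ z 0 := hz i.zero_le
  simp only [trunc] at hlt
  exact ⟨i, mem_range.1 hi, by omega⟩

end Partitions

section MoveUnit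

/-- The exponent of `e^x · e_i / e_1`, as written in `SymShifted`. -/
def moveUnit (x : ℕ → ℕ) (i : ℕ) : ℕ → ℕ :=
  fun t => if t = 0 then x 0 - 1 else if t = i then x i + 1 else x t

variable {n i : ℕ} {x : ℕ → ℕ}

theorem sum_moveUnit_add {M : Type*} [AddCommMonoid M] (g : ℕ → M) (hi0 : 0 < i) (hin : i < n) :
    ∑ j ∈ range n, g (moveUnit x i j) + (g (x 0) + g (x i)) =
      ∑ j ∈ range n, g (x j) + (g (x 0 - 1) + g (x i + 1)) := by
  have h0 : 0 ∈ range n := mem_range.2 (by omega)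
  have hi : i ∈ (range n).erase 0 := mem_erase.2 ⟨hi0.ne', mem_range.2 hin⟩
  rw [← add_sum_erase _ _ h0, ← add_sum_erase _ _ hi, ← add_sum_erase _ (fun j => g (x j)) h0,
    ← add_sum_erase _ _ hi]
  have hrest : ∑ j ∈ ((range n).erase 0).erase i, g (moveUnit x i j) =
      ∑ j ∈ ((range n).erase 0).erase i, g (x j) :=
    sum_congr rfl fun j hj => by
      obtain ⟨hji, hj0, -⟩ := by simpa only [mem_erase] using hj
      simp [moveUnit, hji, hj0]
  rw [hrest]
  simp only [moveUnit, if_neg hi0.ne']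
  ac_rfl

theorem exists_isRearrangement_moveUnit {k : Type*} [Field k] {r : ℕ} {Xs : Set (ℕ → ℕ)}
    (hXs : ∀ x ∈ Xs, PartitionOn n x) (hsize : ∀ x ∈ Xs, psize n x = r)
    (hshift : SymShifted k n (IXset k n Xs)) (hx : x ∈ Xs) (hi0 : 0 < i) (hin : i < n)
    (hxi : x i < x 0) : ∃ x' ∈ Xs, IsRearrangement n (moveUnit x i) x' := by
  have hmon : mon k n x ∈ IXset k n Xs :=
    (mon_mem_IXset_iff Xs x).2 ⟨x, hx, 1, fun _ => le_rfl⟩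
  obtain ⟨x', hx', σ, hle⟩ :=
    (mon_mem_IXset_iff Xs _).1 (hshift x (hXs x hx) hmon i hi0 hin hxi)
  have hsum := sum_moveUnit_add (x := x) id hi0 hin
  have hx'x : psize n x' = psize n x := by rw [hsize x' hx', hsize x hx]
  simp only [id, psize] at hsum hx'x
  exact ⟨x', hx', isRearrangement_of_le_of_sum_eq hle (by omega)⟩

end MoveUnit

theorem exists_mem_excess_lt {k : Type*} [Field k] {n r l : ℕ} {Xs : Set (ℕ → ℕ)}
    (hXs : ∀ x ∈ Xs, PartitionOn n x) (hsize : ∀ x ∈ Xs, psize n x = r)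
    (hshift : SymShifted k n (IXset k n Xs)) {z x : ℕ → ℕ} (hz : PartitionOn n z) (hx : x ∈ Xs)
    (hxz : trunc x (z 0) ≤ z) (hxl : conj x (z 0 + 1) = l + 1) (hr : r ≤ psize n z + l) :
    ∃ x' ∈ Xs, trunc x' (z 0) ≤ z ∧ conj x' (z 0 + 1) ≤ l + 1 ∧
      excess n (z 0) x' < excess n (z 0) x := by
  set c := z 0
  have hxP := hXs x hx
  have hx0 : c + 1 ≤ x 0 := hxP.le_head_of_conj_pos (by omega)
  obtain ⟨i, hin, hxi⟩ := exists_lt_of_psize_le_add hxP.2 hz.antitone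
    (by rw [hsize x hx]; exact hr) hxl.ge
  have hzi : z i ≤ c := hz.1 0 i i.zero_le
  have hi0 : 0 < i := Nat.pos_of_ne_zero fun h => by subst h; omega
  obtain ⟨x', hx', hvx'⟩ := exists_isRearrangement_moveUnit hXs hsize hshift hx hi0 hin (by omega)
  have hx'P := hXs x' hx'
  have hvz : ∀ j < n, trunc (moveUnit x i) c j ≤ z j := fun j _ => by
    have := hxz j
    simp only [trunc, moveUnit] at this ⊢
    split_ifs with hj0 hji <;> subst_vars <;> omega
  have hvl : ∀ j, c + 1 ≤ moveUnit x i j → c + 1 ≤ x j := fun j => by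
    simp only [moveUnit]
    split_ifs with hj0 hji <;> subst_vars <;> omega
  refine ⟨x', hx', trunc_le_of_isRearrangement hx'P hz.antitone hvx' hvz, ?_, ?_⟩
  · rw [conj_eq_card_filter hx'P.2 c.succ_pos, ← hvx'.card_filter, ← hxl,
      conj_eq_card_filter hxP.2 c.succ_pos]
    exact card_le_card (monotone_filter_right _ fun j _ => hvl j)
  · have hsum := sum_moveUnit_add (x := x) (· - c) hi0 hin
    simp only [excess, ← hvx'.sum_comp (· - c)] at hsum ⊢
    omega

theorem stmt_11_general {k : Type*} [Field k] (n r : ℕ)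
    (Xs : Set (ℕ → ℕ)) (hXs : ∀ x ∈ Xs, PartitionOn n x)
    (hsize : ∀ x ∈ Xs, psize n x = r)
    (hshift : SymShifted k n (IXset k n Xs)) :
    ∀ zl ∈ ZX n Xs, psize n zl.1 + zl.2 + 1 ≤ r := by
  rintro ⟨z, l⟩ ⟨hz, hex, hall⟩
  by_contra! hr
  obtain ⟨x, ⟨hx, hxz, hxl⟩, hmin⟩ := (measure (excess n (z 0))).wf.has_min
    {x | x ∈ Xs ∧ trunc x (z 0) ≤ z ∧ conj x (z 0 + 1) ≤ l + 1} hex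
  obtain ⟨x', hx', hx'z, hx'l, hlt⟩ :=
    exists_mem_excess_lt hXs hsize hshift hz hx hxz (hall x hx hxz hxl) (by omega)
  exact hmin x' ⟨hx', hx'z, hx'l⟩ hlt

theorem stmt_11 {k : Type*} [Field k] (n r : ℕ) (hr : 1 ≤ r)
    (Xs : Set (ℕ → ℕ)) (hne : Xs.Nonempty) (hXs : ∀ x ∈ Xs, PartitionOn n x)
    (hsize : ∀ x ∈ Xs, psize n x = r)
    (hshift : SymShifted k n (IXset k n Xs)) :
    ∀ zl ∈ ZX n Xs, psize n zl.1 + zl.2 + 1 ≤ r :=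
  stmt_11_general n r Xs hXs hsize hshift
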